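/- arXiv:2501.00503 — 3 statements merged into one kernel-verified Lean document; each statement's English description precedes it below -/
import Mathlib

section
/- Let φ be a lower semicontinuous submeasure on ω. Then φ is nonpathological if and only if φ is σ-nonpathological (i.e., φ = φ̂ if and only if φ = φ̂_σ). -/
open Filter
open scoped ENNReal

/-- A submeasure on a set (type) `X`. -/
def IsSubmeasure {X : Type*} (φ : Set X → ℝ≥0∞) : Prop :=
  φ ∅ = 0 ∧ (∀ A B : Set X, A ⊆ B → φ A ≤ φ B) ∧ ∀ A B : Set X, φ (A ∪ B) ≤ φ A + φ B

/-- A (finitely additive) measure on `X`. -/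
def IsFAMeasure {X : Type*} (μ : Set X → ℝ≥0∞) : Prop :=
  μ ∅ = 0 ∧ ∀ A B : Set X, Disjoint A B → μ (A ∪ B) = μ A + μ B

/-- A σ-measure on `X`: a measure that is countably additive on pairwise disjoint sequences. -/
def IsSigmaMeasure {X : Type*} (μ : Set X → ℝ≥0∞) : Prop :=
  IsFAMeasure μ ∧ ∀ A : ℕ → Set X, (Pairwise fun m n => Disjoint (A m) (A n)) →
    μ (⋃ n, A n) = ∑' n, μ (A n)

/-- `hat φ A = sup { μ A : μ a measure with μ ≤ φ pointwise }`. -/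
noncomputable def hat {X : Type*} (φ : Set X → ℝ≥0∞) (A : Set X) : ℝ≥0∞ :=
  ⨆ (μ : Set X → ℝ≥0∞) (_ : IsFAMeasure μ ∧ ∀ B, μ B ≤ φ B), μ A

/-- `hatSigma φ A = sup { μ A : μ a σ-measure with μ ≤ φ pointwise }`. -/
noncomputable def hatSigma {X : Type*} (φ : Set X → ℝ≥0∞) (A : Set X) : ℝ≥0∞ :=
  ⨆ (μ : Set X → ℝ≥0∞) (_ : IsSigmaMeasure μ ∧ ∀ B, μ B ≤ φ B), μ A

/-- Lower semicontinuity of a submeasure. -/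
def IsLSC {X : Type*} (φ : Set X → ℝ≥0∞) : Prop :=
  ∀ A : Set X, φ A = ⨆ (F : Set X) (_ : F ⊆ A ∧ F.Finite), φ F

/-- The ratio used in the degree of pathology, with the conventions
`∞/∞ = 0/0 = 1`, `a/0 = ∞` and `∞/a = ∞` for positive real `a`. -/
noncomputable def pratio (a b : ℝ≥0∞) : ℝ≥0∞ :=
  if (a = 0 ∧ b = 0) ∨ (a = ⊤ ∧ b = ⊤) then 1 else a / b

/-- The degree of pathology. -/
noncomputable def degP {X : Type*} (φ : Set X → ℝ≥0∞) : ℝ≥0∞ :=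
  ⨆ A : Set X, pratio (φ A) (hat φ A)

/-- The σ-degree of pathology. -/
noncomputable def degPSigma {X : Type*} (φ : Set X → ℝ≥0∞) : ℝ≥0∞ :=
  ⨆ A : Set X, pratio (φ A) (hatSigma φ A)

/-- The Fin-degree of pathology. -/
noncomputable def degPFin {X : Type*} (φ : Set X → ℝ≥0∞) : ℝ≥0∞ :=
  ⨆ (A : Set X) (_ : A.Finite), pratio (φ A) (hat φ A)

/-! Every measure `μ ≤ φ` restricted to a finite set `F`, i.e. `B ↦ μ (B ∩ F)`, is a finite
combination of Dirac measures, hence countably additive, and still lies below `φ`.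
So `φ̂ F ≤ φ̂_σ F` for finite `F`, and lower semicontinuity reduces `φ = φ̂_σ` to finite sets. -/

open MeasureTheory

variable {X : Type*}

lemma IsFAMeasure.mono {μ : Set X → ℝ≥0∞} (hμ : IsFAMeasure μ) {A B : Set X} (hAB : A ⊆ B) :
    μ A ≤ μ B := by
  rw [← Set.union_sdiff_cancel hAB, hμ.2 A (B \ A) Set.disjoint_sdiff_right]
  exact le_self_add

lemma IsFAMeasure.apply_finset [DecidableEq X] {μ : Set X → ℝ≥0∞} (hμ : IsFAMeasure μ)
    (s : Finset X) : μ s = ∑ x ∈ s, μ {x} := by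
  induction s using Finset.induction_on with
  | empty => simpa using hμ.1
  | insert a s ha ih =>
    rw [Finset.coe_insert, Set.insert_eq, hμ.2 _ _ (by simpa using ha), ih,
      Finset.sum_insert ha]

lemma isSigmaMeasure_measure [MeasurableSpace X] [DiscreteMeasurableSpace X] (m : Measure X) :
    IsSigmaMeasure fun B => m B :=
  ⟨⟨measure_empty, fun _ _ h => measure_union h .of_discrete⟩,
    fun _ hd => measure_iUnion hd fun _ => .of_discrete⟩

lemma IsFAMeasure.isSigmaMeasure_restrict {μ : Set X → ℝ≥0∞} (hμ : IsFAMeasure μ) {F : Set X}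
    (hF : F.Finite) : IsSigmaMeasure fun B => μ (B ∩ F) := by
  classical
  let _ : MeasurableSpace X := ⊤
  convert isSigmaMeasure_measure (∑ x ∈ hF.toFinset, μ {x} • Measure.dirac x) using 2 with B
  have hBF : B ∩ F = ↑(hF.toFinset.filter (· ∈ B)) := by ext; simp [and_comm]
  rw [hBF, hμ.apply_finset, Finset.sum_filter, Measure.finsetSum_apply]
  refine Finset.sum_congr rfl fun x _ => ?_
  by_cases hx : x ∈ B <;> simp [hx]

lemma hat_le (φ : Set X → ℝ≥0∞) (A : Set X) : hat φ A ≤ φ A :=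
  iSup₂_le fun _ h => h.2 A

lemma hatSigma_le (φ : Set X → ℝ≥0∞) (A : Set X) : hatSigma φ A ≤ φ A :=
  iSup₂_le fun _ h => h.2 A

lemma hatSigma_le_hat (φ : Set X → ℝ≥0∞) (A : Set X) : hatSigma φ A ≤ hat φ A :=
  iSup₂_le fun μ hμ => le_iSup₂_of_le μ ⟨hμ.1.1, hμ.2⟩ le_rfl

lemma hatSigma_mono (φ : Set X → ℝ≥0∞) {A B : Set X} (hAB : A ⊆ B) :
    hatSigma φ A ≤ hatSigma φ B :=
  iSup₂_le fun μ hμ => (hμ.1.1.mono hAB).trans (le_iSup₂_of_le μ hμ le_rfl)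

lemma hat_le_hatSigma_of_finite {φ : Set X → ℝ≥0∞} (hφ : ∀ A B : Set X, A ⊆ B → φ A ≤ φ B)
    {F : Set X} (hF : F.Finite) : hat φ F ≤ hatSigma φ F := by
  refine iSup₂_le fun μ hμ => ?_
  have hle : ∀ B, μ (B ∩ F) ≤ φ B := fun B => (hμ.2 _).trans (hφ _ _ Set.inter_subset_left)
  calc μ F = μ (F ∩ F) := by rw [Set.inter_self]
    _ ≤ hatSigma φ F := le_iSup₂_of_le (fun B => μ (B ∩ F))
        ⟨hμ.1.isSigmaMeasure_restrict hF, hle⟩ le_rfl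

/-- A lower semicontinuous submeasure on `ω` is nonpathological iff it is σ-nonpathological. -/
theorem stmt3 (φ : Set ℕ → ℝ≥0∞) (hφ : IsSubmeasure φ) (hlsc : IsLSC φ) :
    (∀ A, hat φ A = φ A) ↔ (∀ A, hatSigma φ A = φ A) := by
  constructor
  · intro hhat A
    refine le_antisymm (hatSigma_le φ A) ?_
    rw [hlsc A]
    refine iSup₂_le fun F ⟨hFA, hF⟩ => ?_
    calc φ F = hat φ F := (hhat F).symm
      _ ≤ hatSigma φ F := hat_le_hatSigma_of_finite hφ.2.1 hF
      _ ≤ hatSigma φ A := hatSigma_mono φ hFA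
  · intro hsig A
    exact le_antisymm (hat_le φ A) ((hsig A).ge.trans (hatSigma_le_hat φ A))
end

section
/- Let φ and ψ be submeasures on ω and define, on X = {0,1} × ω, (φ ⊕_m ψ)(A) = max{φ(A₀), ψ(A₁)} and (φ ⊕_s ψ)(A) = φ(A₀) + ψ(A₁), where A₀ = {n : (0,n) ∈ A} and A₁ = {n : (1,n) ∈ A}. Then P(φ ⊕_m ψ) = max{P(φ), P(ψ)} and P(φ ⊕_s ψ) = max{P(φ), P(ψ)}. The same equalities hold for P_σ and for P_Fin. -/
open Filter
open scoped ENNReal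

/-- `(φ ⊕_m ψ)(A) = max (φ A₀) (ψ A₁)` on `{0,1} × ω`. -/
noncomputable def oplusM (φ ψ : Set ℕ → ℝ≥0∞) : Set (Fin 2 × ℕ) → ℝ≥0∞ :=
  fun A => max (φ {n | ((0 : Fin 2), n) ∈ A}) (ψ {n | ((1 : Fin 2), n) ∈ A})

/-- `(φ ⊕_s ψ)(A) = φ A₀ + ψ A₁` on `{0,1} × ω`. -/
noncomputable def oplusS (φ ψ : Set ℕ → ℝ≥0∞) : Set (Fin 2 × ℕ) → ℝ≥0∞ :=
  fun A => φ {n | ((0 : Fin 2), n) ∈ A} + ψ {n | ((1 : Fin 2), n) ∈ A}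

/-!
Each summand embeds into `{0,1} × ω` by `n ↦ (i, n)`. Measures below `φ` (or `ψ`) push forward
along these embeddings to measures below `φ ⊕ ψ`, and measures below `φ ⊕ ψ` restrict to measures
below `φ` (or `ψ`). Hence `φ ⊕ ψ` and `φ` have the same ratio `φ / φ̂` on sets inside the first
copy, and on an arbitrary `A` we get `(φ ⊕_m ψ)^(A) ≥ max (φ̂ A₀) (ψ̂ A₁)` and
`(φ ⊕_s ψ)^(A) ≥ φ̂ A₀ + ψ̂ A₁`. A ratio of maxima, or of sums (a mediant), is at most the larger
of the two ratios.
-/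

open Function

section Pratio

variable {a b b' c d M : ℝ≥0∞}

theorem pratio_le_pratio_right (h : b ≤ b') : pratio a b' ≤ pratio a b := by
  unfold pratio
  split_ifs with h1 h2 h2
  · exact le_rfl
  · rcases h1 with ⟨rfl, hb'⟩ | ⟨rfl, rfl⟩
    · exact absurd (Or.inl ⟨rfl, le_antisymm (hb' ▸ h) zero_le⟩) h2
    · have hb : b ≠ ⊤ := fun hb => h2 (Or.inr ⟨rfl, hb⟩)
      rw [ENNReal.top_div, if_neg hb]
      exact le_top
  · rcases h2 with ⟨rfl, -⟩ | ⟨rfl, rfl⟩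
    · simp
    · exact absurd (Or.inr ⟨rfl, top_le_iff.mp h⟩) h1
  · exact ENNReal.div_le_div le_rfl h

theorem one_le_pratio (h : b ≤ a) : 1 ≤ pratio a b := by
  unfold pratio
  split_ifs with h1
  · exact le_rfl
  rcases eq_or_ne b 0 with rfl | hb0
  · have ha : a ≠ 0 := fun ha => h1 (Or.inl ⟨ha, rfl⟩)
    simp [ENNReal.div_zero ha]
  rcases eq_or_ne b ⊤ with rfl | hbt
  · exact absurd (Or.inr ⟨top_le_iff.mp h, rfl⟩) h1
  rwa [ENNReal.le_div_iff_mul_le (Or.inl hb0) (Or.inl hbt), one_mul]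

theorem le_mul_of_pratio_le (hba : b ≤ a) (h : pratio a b ≤ M) (hM : M ≠ ⊤) : a ≤ M * b := by
  have h1 : 1 ≤ M := (one_le_pratio hba).trans h
  unfold pratio at h
  split_ifs at h with hc
  · rcases hc with ⟨rfl, -⟩ | ⟨rfl, rfl⟩
    · exact zero_le
    · rw [ENNReal.mul_top (one_pos.trans_le h1).ne']
  rcases eq_or_ne b 0 with rfl | hb0
  · have ha : a ≠ 0 := fun ha => hc (Or.inl ⟨ha, rfl⟩)
    rw [ENNReal.div_zero ha] at h
    exact absurd (top_le_iff.mp h) hM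
  rcases eq_or_ne b ⊤ with rfl | hbt
  · exact absurd (Or.inr ⟨top_le_iff.mp hba, rfl⟩) hc
  calc a = a / b * b := (ENNReal.div_mul_cancel hb0 hbt).symm
    _ ≤ M * b := mul_le_mul_left h b

theorem pratio_le_of_le_mul (h1 : 1 ≤ M) (h : a ≤ M * b) : pratio a b ≤ M := by
  unfold pratio
  split_ifs
  · exact h1
  · exact ENNReal.div_le_of_le_mul h

theorem pratio_max_le :
    pratio (max a c) (max b d) ≤ max (pratio a b) (pratio c d) := by
  rcases le_total c a with h | h
  · rw [max_eq_left h]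
    exact (pratio_le_pratio_right (le_max_left b d)).trans (le_max_left _ _)
  · rw [max_eq_right h]
    exact (pratio_le_pratio_right (le_max_right b d)).trans (le_max_right _ _)

theorem pratio_add_le (hba : b ≤ a) (hdc : d ≤ c) :
    pratio (a + c) (b + d) ≤ max (pratio a b) (pratio c d) := by
  set M := max (pratio a b) (pratio c d)
  rcases eq_or_ne M ⊤ with hMt | hMt
  · exact hMt ▸ le_top
  have ha : a ≤ M * b := le_mul_of_pratio_le hba (le_max_left _ _) hMt
  have hc : c ≤ M * d := le_mul_of_pratio_le hdc (le_max_right _ _) hMt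
  refine pratio_le_of_le_mul ((one_le_pratio hba).trans (le_max_left _ _)) ?_
  calc a + c ≤ M * b + M * d := add_le_add ha hc
    _ = M * (b + d) := (mul_add M b d).symm

end Pratio

theorem IsFAMeasure.add {X : Type*} {μ ν : Set X → ℝ≥0∞} (hμ : IsFAMeasure μ)
    (hν : IsFAMeasure ν) : IsFAMeasure (μ + ν) := by
  refine ⟨by simp [hμ.1, hν.1], fun A B hAB => ?_⟩
  simp only [Pi.add_apply, hμ.2 A B hAB, hν.2 A B hAB]
  ring

theorem IsFAMeasure.map {X Y : Type*} (g : X → Y) {μ : Set X → ℝ≥0∞} (hμ : IsFAMeasure μ) :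
    IsFAMeasure fun A : Set Y => μ (g ⁻¹' A) :=
  ⟨hμ.1, fun _ _ hAB => hμ.2 _ _ (hAB.preimage g)⟩

theorem IsFAMeasure.comap {X Y : Type*} {f : X → Y} (hf : Injective f) {μ : Set Y → ℝ≥0∞}
    (hμ : IsFAMeasure μ) : IsFAMeasure fun B : Set X => μ (f '' B) := by
  refine ⟨by simpa using hμ.1, fun A B hAB => ?_⟩
  simp only [Set.image_union]
  exact hμ.2 _ _ (Set.disjoint_image_of_injective hf hAB)

universe u

structure MeasureKind where
  IsMeasure : ∀ {X : Type u}, (Set X → ℝ≥0∞) → Prop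
  zero {X : Type u} : IsMeasure (0 : Set X → ℝ≥0∞)
  add {X : Type u} {μ ν : Set X → ℝ≥0∞} : IsMeasure μ → IsMeasure ν → IsMeasure (μ + ν)
  map {X Y : Type u} (g : X → Y) {μ : Set X → ℝ≥0∞} :
    IsMeasure μ → IsMeasure fun A : Set Y => μ (g ⁻¹' A)
  comap {X Y : Type u} {f : X → Y} (hf : Injective f) {μ : Set Y → ℝ≥0∞} :
    IsMeasure μ → IsMeasure fun B : Set X => μ (f '' B)

namespace MeasureKind

def finitelyAdditive : MeasureKind.{u} where
  IsMeasure := IsFAMeasure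
  zero := ⟨rfl, fun _ _ _ => (add_zero 0).symm⟩
  add := IsFAMeasure.add
  map := IsFAMeasure.map
  comap := IsFAMeasure.comap

def sigma : MeasureKind.{u} where
  IsMeasure := IsSigmaMeasure
  zero := ⟨finitelyAdditive.zero, fun _ _ => by simp⟩
  add hμ hν := ⟨hμ.1.add hν.1, fun A hA => by
    simp only [Pi.add_apply, hμ.2 A hA, hν.2 A hA, ENNReal.tsum_add]⟩
  map g _ hμ := ⟨hμ.1.map g, fun A hA => by
    simpa only [Set.preimage_iUnion] using hμ.2 _ fun m n hmn => (hA hmn).preimage g⟩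
  comap hf _ hμ := ⟨hμ.1.comap hf, fun A hA => by
    simpa only [Set.image_iUnion] using
      hμ.2 _ fun m n hmn => Set.disjoint_image_of_injective hf (hA hmn)⟩

variable (K : MeasureKind.{u}) {X Y : Type u}

-- `finitelyAdditive.hat` is `hat` and `sigma.hat` is `hatSigma`, definitionally.
noncomputable def hat (φ : Set X → ℝ≥0∞) (A : Set X) : ℝ≥0∞ :=
  ⨆ (μ : Set X → ℝ≥0∞) (_ : K.IsMeasure μ ∧ ∀ B, μ B ≤ φ B), μ A

variable {K}

theorem hat_le_self (φ : Set X → ℝ≥0∞) (A : Set X) : K.hat φ A ≤ φ A :=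
  iSup₂_le fun _ hμ => hμ.2 A

theorem le_hat {φ μ : Set X → ℝ≥0∞} (hμ : K.IsMeasure μ) (hle : ∀ B, μ B ≤ φ B) (A : Set X) :
    μ A ≤ K.hat φ A :=
  le_iSup₂_of_le (f := fun μ (_ : K.IsMeasure μ ∧ ∀ B, μ B ≤ φ B) => μ A) μ ⟨hμ, hle⟩ le_rfl

theorem hat_image_le {φ : Set X → ℝ≥0∞} {χ : Set Y → ℝ≥0∞} {f : X → Y} (hf : Injective f)
    (h : ∀ B, χ (f '' B) ≤ φ B) (B : Set X) : K.hat χ (f '' B) ≤ K.hat φ B :=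
  iSup₂_le fun _ hμ => le_hat (K.comap hf hμ.1) (fun C => (hμ.2 _).trans (h C)) B

theorem hat_preimage_le {φ : Set X → ℝ≥0∞} {χ : Set Y → ℝ≥0∞} {g : X → Y}
    (h : ∀ A, φ (g ⁻¹' A) ≤ χ A) (A : Set Y) : K.hat φ (g ⁻¹' A) ≤ K.hat χ A :=
  iSup₂_le fun _ hν => le_hat (K.map g hν.1) (fun C => (hν.2 _).trans (h C)) A

theorem hat_preimage_add_hat_preimage_le {φ ψ : Set X → ℝ≥0∞} {χ : Set Y → ℝ≥0∞} {f g : X → Y}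
    (h : ∀ A, φ (f ⁻¹' A) + ψ (g ⁻¹' A) ≤ χ A) (A : Set Y) :
    K.hat φ (f ⁻¹' A) + K.hat ψ (g ⁻¹' A) ≤ K.hat χ A :=
  ENNReal.biSup_add_biSup_le' ⟨0, K.zero, fun _ => zero_le⟩ ⟨0, K.zero, fun _ => zero_le⟩
    fun _ hμ _ hν => le_hat (K.add (K.map f hμ.1) (K.map g hν.1))
      (fun C => (add_le_add (hμ.2 _) (hν.2 _)).trans (h C)) A

theorem pratio_hat_le_pratio_hat_image {φ : Set X → ℝ≥0∞} {χ : Set Y → ℝ≥0∞} {f : X → Y}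
    (hf : Injective f) (h : ∀ B, χ (f '' B) = φ B) (B : Set X) :
    pratio (φ B) (K.hat φ B) ≤ pratio (χ (f '' B)) (K.hat χ (f '' B)) :=
  h B ▸ pratio_le_pratio_right (hat_image_le hf (fun C => (h C).le) B)

theorem pratio_hat_le_of_eq_max {φ ψ : Set X → ℝ≥0∞} {χ : Set Y → ℝ≥0∞} {f g : X → Y}
    (hχ : ∀ A, χ A = max (φ (f ⁻¹' A)) (ψ (g ⁻¹' A))) (A : Set Y) :
    pratio (χ A) (K.hat χ A) ≤
      max (pratio (φ (f ⁻¹' A)) (K.hat φ (f ⁻¹' A))) (pratio (ψ (g ⁻¹' A)) (K.hat ψ (g ⁻¹' A))) :=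
  calc pratio (χ A) (K.hat χ A)
      ≤ pratio (χ A) (max (K.hat φ (f ⁻¹' A)) (K.hat ψ (g ⁻¹' A))) :=
        pratio_le_pratio_right <| max_le
          (hat_preimage_le (fun C => (hχ C).ge.trans' (le_max_left _ _)) A)
          (hat_preimage_le (fun C => (hχ C).ge.trans' (le_max_right _ _)) A)
    _ ≤ _ := hχ A ▸ pratio_max_le

theorem pratio_hat_le_of_eq_add {φ ψ : Set X → ℝ≥0∞} {χ : Set Y → ℝ≥0∞} {f g : X → Y}
    (hχ : ∀ A, χ A = φ (f ⁻¹' A) + ψ (g ⁻¹' A)) (A : Set Y) :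
    pratio (χ A) (K.hat χ A) ≤
      max (pratio (φ (f ⁻¹' A)) (K.hat φ (f ⁻¹' A))) (pratio (ψ (g ⁻¹' A)) (K.hat ψ (g ⁻¹' A))) :=
  calc pratio (χ A) (K.hat χ A)
      ≤ pratio (χ A) (K.hat φ (f ⁻¹' A) + K.hat ψ (g ⁻¹' A)) :=
        pratio_le_pratio_right (hat_preimage_add_hat_preimage_le (fun C => (hχ C).ge) A)
    _ ≤ _ := hχ A ▸ pratio_add_le (hat_le_self _ _) (hat_le_self _ _)

end MeasureKind

section Supremum

variable {X Y : Type*} {F : Set Y → ℝ≥0∞} {G H : Set X → ℝ≥0∞} {f g : X → Y}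

theorem iSup_eq_max_of_le_of_le (hF : ∀ A, F A ≤ max (G (f ⁻¹' A)) (H (g ⁻¹' A)))
    (hG : ∀ B, G B ≤ F (f '' B)) (hH : ∀ B, H B ≤ F (g '' B)) :
    ⨆ A, F A = max (⨆ B, G B) (⨆ B, H B) :=
  le_antisymm (iSup_le fun A => (hF A).trans (max_le_max (le_iSup G _) (le_iSup H _)))
    (max_le (iSup_le fun B => (hG B).trans (le_iSup F _))
      (iSup_le fun B => (hH B).trans (le_iSup F _)))

theorem iSup_finite_eq_max_of_le_of_le (hf : Injective f) (hg : Injective g)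
    (hF : ∀ A, F A ≤ max (G (f ⁻¹' A)) (H (g ⁻¹' A)))
    (hG : ∀ B, G B ≤ F (f '' B)) (hH : ∀ B, H B ≤ F (g '' B)) :
    ⨆ (A) (_ : A.Finite), F A =
      max (⨆ (B) (_ : B.Finite), G B) (⨆ (B) (_ : B.Finite), H B) :=
  iSup_eq_max_of_le_of_le (F := fun A => ⨆ _ : A.Finite, F A) (G := fun B => ⨆ _ : B.Finite, G B)
    (H := fun B => ⨆ _ : B.Finite, H B) (f := f) (g := g)
    (fun A => iSup_le fun hA => (hF A).trans <| max_le_max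
      (le_iSup_of_le (hA.preimage hf.injOn) le_rfl) (le_iSup_of_le (hA.preimage hg.injOn) le_rfl))
    (fun B => iSup_le fun hB => le_iSup_of_le (hB.image f) (hG B))
    (fun B => iSup_le fun hB => le_iSup_of_le (hB.image g) (hH B))

end Supremum

section DirectSum

variable {φ ψ : Set ℕ → ℝ≥0∞}

theorem injective_mk_zero : Injective (Prod.mk (0 : Fin 2) : ℕ → Fin 2 × ℕ) :=
  Prod.mk_right_injective 0

theorem injective_mk_one : Injective (Prod.mk (1 : Fin 2) : ℕ → Fin 2 × ℕ) :=
  Prod.mk_right_injective 1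

theorem oplusM_image_mk_zero (hψ : ψ ∅ = 0) (B : Set ℕ) : oplusM φ ψ (Prod.mk 0 '' B) = φ B := by
  simp [oplusM, hψ]

theorem oplusM_image_mk_one (hφ : φ ∅ = 0) (B : Set ℕ) : oplusM φ ψ (Prod.mk 1 '' B) = ψ B := by
  simp [oplusM, hφ]

theorem oplusS_image_mk_zero (hψ : ψ ∅ = 0) (B : Set ℕ) : oplusS φ ψ (Prod.mk 0 '' B) = φ B := by
  simp [oplusS, hψ]

theorem oplusS_image_mk_one (hφ : φ ∅ = 0) (B : Set ℕ) : oplusS φ ψ (Prod.mk 1 '' B) = ψ B := by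
  simp [oplusS, hφ]

variable (K : MeasureKind.{0})

theorem iSup_pratio_hat_oplusM (hφ : φ ∅ = 0) (hψ : ψ ∅ = 0) :
    ⨆ A, pratio (oplusM φ ψ A) (K.hat (oplusM φ ψ) A) =
      max (⨆ B, pratio (φ B) (K.hat φ B)) (⨆ B, pratio (ψ B) (K.hat ψ B)) :=
  iSup_eq_max_of_le_of_le (MeasureKind.pratio_hat_le_of_eq_max fun _ => rfl)
    (MeasureKind.pratio_hat_le_pratio_hat_image injective_mk_zero (oplusM_image_mk_zero hψ))
    (MeasureKind.pratio_hat_le_pratio_hat_image injective_mk_one (oplusM_image_mk_one hφ))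

theorem iSup_pratio_hat_oplusS (hφ : φ ∅ = 0) (hψ : ψ ∅ = 0) :
    ⨆ A, pratio (oplusS φ ψ A) (K.hat (oplusS φ ψ) A) =
      max (⨆ B, pratio (φ B) (K.hat φ B)) (⨆ B, pratio (ψ B) (K.hat ψ B)) :=
  iSup_eq_max_of_le_of_le (MeasureKind.pratio_hat_le_of_eq_add fun _ => rfl)
    (MeasureKind.pratio_hat_le_pratio_hat_image injective_mk_zero (oplusS_image_mk_zero hψ))
    (MeasureKind.pratio_hat_le_pratio_hat_image injective_mk_one (oplusS_image_mk_one hφ))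

theorem iSup_finite_pratio_hat_oplusM (hφ : φ ∅ = 0) (hψ : ψ ∅ = 0) :
    ⨆ (A) (_ : A.Finite), pratio (oplusM φ ψ A) (K.hat (oplusM φ ψ) A) =
      max (⨆ (B) (_ : B.Finite), pratio (φ B) (K.hat φ B))
        (⨆ (B) (_ : B.Finite), pratio (ψ B) (K.hat ψ B)) :=
  iSup_finite_eq_max_of_le_of_le injective_mk_zero injective_mk_one
    (MeasureKind.pratio_hat_le_of_eq_max fun _ => rfl)
    (MeasureKind.pratio_hat_le_pratio_hat_image injective_mk_zero (oplusM_image_mk_zero hψ))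
    (MeasureKind.pratio_hat_le_pratio_hat_image injective_mk_one (oplusM_image_mk_one hφ))

theorem iSup_finite_pratio_hat_oplusS (hφ : φ ∅ = 0) (hψ : ψ ∅ = 0) :
    ⨆ (A) (_ : A.Finite), pratio (oplusS φ ψ A) (K.hat (oplusS φ ψ) A) =
      max (⨆ (B) (_ : B.Finite), pratio (φ B) (K.hat φ B))
        (⨆ (B) (_ : B.Finite), pratio (ψ B) (K.hat ψ B)) :=
  iSup_finite_eq_max_of_le_of_le injective_mk_zero injective_mk_one
    (MeasureKind.pratio_hat_le_of_eq_add fun _ => rfl)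
    (MeasureKind.pratio_hat_le_pratio_hat_image injective_mk_zero (oplusS_image_mk_zero hψ))
    (MeasureKind.pratio_hat_le_pratio_hat_image injective_mk_one (oplusS_image_mk_one hφ))

end DirectSum

/-- For submeasures `φ, ψ` on `ω`: `P(φ ⊕_m ψ) = max (P φ) (P ψ)` and
`P(φ ⊕_s ψ) = max (P φ) (P ψ)`; the same equalities hold for `P_σ` and `P_Fin`. -/
theorem stmt10 (φ ψ : Set ℕ → ℝ≥0∞) (hφ : IsSubmeasure φ) (hψ : IsSubmeasure ψ) :
    degP (oplusM φ ψ) = max (degP φ) (degP ψ) ∧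
    degP (oplusS φ ψ) = max (degP φ) (degP ψ) ∧
    degPSigma (oplusM φ ψ) = max (degPSigma φ) (degPSigma ψ) ∧
    degPSigma (oplusS φ ψ) = max (degPSigma φ) (degPSigma ψ) ∧
    degPFin (oplusM φ ψ) = max (degPFin φ) (degPFin ψ) ∧
    degPFin (oplusS φ ψ) = max (degPFin φ) (degPFin ψ) :=
  open MeasureKind in
  ⟨iSup_pratio_hat_oplusM finitelyAdditive hφ.1 hψ.1,
    iSup_pratio_hat_oplusS finitelyAdditive hφ.1 hψ.1,
    iSup_pratio_hat_oplusM sigma hφ.1 hψ.1,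
    iSup_pratio_hat_oplusS sigma hφ.1 hψ.1,
    iSup_finite_pratio_hat_oplusM finitelyAdditive hφ.1 hψ.1,
    iSup_finite_pratio_hat_oplusS finitelyAdditive hφ.1 hψ.1⟩
end

section
/- Let I be an F_σ ideal on ℕ (i.e., I = Fin(ψ) for some lower semicontinuous submeasure ψ with ψ(ℕ) = ∞ and ψ(F) < ∞ for finite F) which can be represented as an intersection of summable ideals. Then for every X ∉ I there exists a lower semicontinuous submeasure φ on ℕ such that Fin(φ) = I and φ̂_σ(X) = ∞. -/
open Filter
open scoped ENNReal

/-- The summable ideal generated by `g : ℕ → [0,∞)`. -/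
def summableIdeal (g : ℕ → ℝ) : Set (Set ℕ) :=
  {A | Summable (A.indicator g)}

/-
The weights of a single summable ideal already do the job. Since `X ∉ I` and `I` is an intersection
of summable ideals, some `I_g ⊇ I` misses `X`. The weighted counting measure `μ A = ∑_{n ∈ A ∩ X} g n`
is a σ-measure with `μ X = ∞` and `μ A < ∞` for every `A ∈ I ⊆ I_g`, so `φ = ψ + μ` is an lsc
submeasure with `Fin φ = Fin ψ = I` which dominates `μ`, whence `φ̂_σ X ≥ μ X = ∞`.
-/

open Set

section Submeasure

variable {X : Type*} {φ ψ μ : Set X → ℝ≥0∞}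

theorem IsSubmeasure.monotone (hφ : IsSubmeasure φ) : Monotone φ :=
  fun A B hAB => hφ.2.1 A B hAB

theorem IsSubmeasure.add (hφ : IsSubmeasure φ) (hψ : IsSubmeasure ψ) : IsSubmeasure (φ + ψ) := by
  refine ⟨by simp [hφ.1, hψ.1], fun A B hAB => add_le_add (hφ.2.1 A B hAB) (hψ.2.1 A B hAB),
    fun A B => ?_⟩
  calc φ (A ∪ B) + ψ (A ∪ B) ≤ (φ A + φ B) + (ψ A + ψ B) := add_le_add (hφ.2.2 A B) (hψ.2.2 A B)
    _ = (φ A + ψ A) + (φ B + ψ B) := add_add_add_comm _ _ _ _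

theorem IsLSC.add (hφ : IsLSC φ) (hψ : IsLSC ψ) (hφm : Monotone φ) (hψm : Monotone ψ) :
    IsLSC (φ + ψ) := by
  intro A
  simp only [Pi.add_apply]
  rw [hφ A, hψ A, iSup_subtype', iSup_subtype', iSup_subtype']
  refine ENNReal.iSup_add_iSup fun F F' => ⟨⟨F.1 ∪ F'.1, union_subset F.2.1 F'.2.1,
    F.2.2.union F'.2.2⟩, add_le_add (hφm subset_union_left) (hψm subset_union_right)⟩

theorem IsFAMeasure.monotone (hμ : IsFAMeasure μ) : Monotone μ := by
  intro A B hAB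
  rw [← union_sdiff_cancel hAB, hμ.2 A (B \ A) disjoint_sdiff_right]
  exact le_self_add

theorem IsFAMeasure.isSubmeasure (hμ : IsFAMeasure μ) : IsSubmeasure μ := by
  refine ⟨hμ.1, fun A B hAB => hμ.monotone hAB, fun A B => ?_⟩
  rw [← union_sdiff_self, hμ.2 A (B \ A) disjoint_sdiff_right]
  exact add_le_add_right (hμ.monotone sdiff_subset) _

theorem le_hatSigma (hμ : IsSigmaMeasure μ) (hμφ : ∀ B, μ B ≤ φ B) (A : Set X) :
    μ A ≤ hatSigma φ A :=
  le_iSup₂ (f := fun ν (_ : IsSigmaMeasure ν ∧ ∀ B, ν B ≤ φ B) => ν A) μ ⟨hμ, hμφ⟩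

end Submeasure

section WeightedCount

variable {X : Type*}

noncomputable def weightedCount (w : X → ℝ≥0∞) (A : Set X) : ℝ≥0∞ :=
  ∑' x, A.indicator w x

theorem isSigmaMeasure_weightedCount (w : X → ℝ≥0∞) : IsSigmaMeasure (weightedCount w) := by
  refine ⟨⟨by simp [weightedCount], fun A B hAB => ?_⟩, fun A hA => ?_⟩
  · simp only [weightedCount, indicator_union_of_disjoint hAB]
    exact ENNReal.tsum_add
  · simp only [weightedCount, indicator_iUnion_of_pairwise_disjoint A hA]
    exact ENNReal.tsum_comm

theorem weightedCount_mono (w : X → ℝ≥0∞) : Monotone (weightedCount w) :=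
  (isSigmaMeasure_weightedCount w).1.monotone

theorem isLSC_weightedCount (w : X → ℝ≥0∞) : IsLSC (weightedCount w) := by
  intro A
  refine le_antisymm ?_ (iSup₂_le fun F hF => weightedCount_mono w hF.1)
  rw [weightedCount, ENNReal.tsum_eq_iSup_sum]
  refine iSup_le fun s => le_iSup₂_of_le (↑s ∩ A)
    ⟨inter_subset_right, s.finite_toSet.inter_of_left A⟩ ?_
  calc ∑ x ∈ s, A.indicator w x = ∑ x ∈ s, (↑s ∩ A).indicator w x := by
        rw [← indicator_indicator]
        exact Finset.sum_congr rfl fun x hx => (indicator_of_mem hx _).symm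
    _ ≤ weightedCount w (↑s ∩ A) := ENNReal.sum_le_tsum s

theorem weightedCount_indicator (w : X → ℝ≥0∞) (Y A : Set X) :
    weightedCount (Y.indicator w) A = weightedCount w (A ∩ Y) := by
  simp only [weightedCount, indicator_indicator]

theorem weightedCount_ofReal_lt_top_iff {g : X → ℝ} (hg : ∀ x, 0 ≤ g x) (A : Set X) :
    weightedCount (fun x => ENNReal.ofReal (g x)) A < ⊤ ↔ Summable (A.indicator g) := by
  have hA : A.indicator (fun x => ENNReal.ofReal (g x)) = fun x => ENNReal.ofReal (A.indicator g x) :=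
    indicator_comp_of_zero (g := ENNReal.ofReal) ENNReal.ofReal_zero
  rw [weightedCount, hA]
  refine ⟨fun h => ?_, Summable.tsum_ofReal_lt_top⟩
  simpa [ENNReal.toReal_ofReal (indicator_nonneg (fun x _ => hg x) _)] using
    ENNReal.summable_toReal h.ne

end WeightedCount

theorem stmt17_general (ψ : Set ℕ → ℝ≥0∞) (hψ : IsSubmeasure ψ) (hlsc : IsLSC ψ)
    (hrep : ∃ G : Set (ℕ → ℝ), (∀ g ∈ G, (∀ n, 0 ≤ g n) ∧ ¬ Summable g) ∧
      {A : Set ℕ | ψ A < ⊤} = ⋂ g ∈ G, summableIdeal g) :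
    ∀ X : Set ℕ, ψ X = ⊤ → ∃ φ : Set ℕ → ℝ≥0∞, IsSubmeasure φ ∧ IsLSC φ ∧
      {A : Set ℕ | φ A < ⊤} = {A : Set ℕ | ψ A < ⊤} ∧ hatSigma φ X = ⊤ := by
  obtain ⟨G, hG, hGrep⟩ := hrep
  intro X hX
  have hXI : X ∉ ⋂ g ∈ G, summableIdeal g := by simp [← hGrep, hX]
  obtain ⟨g, hgG, hXg⟩ : ∃ g ∈ G, X ∉ summableIdeal g := by simpa using hXI
  have hg := weightedCount_ofReal_lt_top_iff (hG g hgG).1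
  set μ := weightedCount (X.indicator fun n => ENNReal.ofReal (g n)) with hμ_def
  have hμ : IsSigmaMeasure μ := isSigmaMeasure_weightedCount _
  have hμ_fin (A : Set ℕ) (hA : ψ A < ⊤) : μ A < ⊤ := by
    have hAI : A ∈ ⋂ g ∈ G, summableIdeal g := hGrep ▸ hA
    rw [hμ_def, weightedCount_indicator]
    exact (weightedCount_mono _ inter_subset_left).trans_lt ((hg A).2 (mem_iInter₂.1 hAI g hgG))
  have hμX : μ X = ⊤ := by
    rw [hμ_def, weightedCount_indicator, inter_self]
    exact not_lt_top_iff.1 fun h => hXg ((hg X).1 h)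
  refine ⟨ψ + μ, hψ.add hμ.1.isSubmeasure,
    hlsc.add (isLSC_weightedCount _) hψ.monotone hμ.1.monotone, ?_, ?_⟩
  · ext A
    simp only [mem_ofPred_eq, Pi.add_apply, ENNReal.add_lt_top]
    exact ⟨And.left, fun hA => ⟨hA, hμ_fin A hA⟩⟩
  · exact top_le_iff.1 (hμX ▸ le_hatSigma hμ (fun B => le_add_self) X)

/-- If `I = Fin ψ` is an `F_σ` ideal which is an intersection of summable ideals, then for
every `X ∉ I` there is an lsc submeasure `φ` with `Fin φ = I` and `φ̂_σ X = ∞`. -/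
theorem stmt17 (ψ : Set ℕ → ℝ≥0∞) (hψ : IsSubmeasure ψ) (hlsc : IsLSC ψ)
    (hinf : ψ Set.univ = ⊤) (hfin : ∀ F : Set ℕ, F.Finite → ψ F < ⊤)
    (hrep : ∃ G : Set (ℕ → ℝ), (∀ g ∈ G, (∀ n, 0 ≤ g n) ∧ ¬ Summable g) ∧
      {A : Set ℕ | ψ A < ⊤} = ⋂ g ∈ G, summableIdeal g) :
    ∀ X : Set ℕ, ψ X = ⊤ → ∃ φ : Set ℕ → ℝ≥0∞, IsSubmeasure φ ∧ IsLSC φ ∧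
      {A : Set ℕ | φ A < ⊤} = {A : Set ℕ | ψ A < ⊤} ∧ hatSigma φ X = ⊤ :=
  stmt17_general ψ hψ hlsc hrep
end
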